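/- If S is invertible with S* = λ S⁻¹ for some λ ∈ ℂ, then S is C-normal if and only if λ is real. -/

import Mathlib

open ContinuousLinearMap

variable {H : Type*} [NormedAddCommGroup H] [InnerProductSpace ℂ H] [CompleteSpace H]

/-- A conjugation on `H`: antilinear, involutive, and `⟪Cx, Cy⟫ = ⟪y, x⟫`. -/
def Conjugation (C : H → H) : Prop :=
  (∀ (a : ℂ) (x y : H), C (a • x + y) = (starRingEnd ℂ) a • C x + C y) ∧
  (∀ x : H, C (C x) = x) ∧
  (∀ x y : H, (inner ℂ (C x) (C y) : ℂ) = inner ℂ y x)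

/-- `S` is `C`-normal: `C S* S C = S S*`. -/
def CNormal (C : H → H) (S : H →L[ℂ] H) : Prop :=
  ∀ x : H, C (adjoint S (S (C x))) = S (adjoint S x)

/-- `S` is 2-`C`-normal: `C S S* C S* = S* C S* S C`. -/
def TwoCNormal (C : H → H) (S : H →L[ℂ] H) : Prop :=
  ∀ x : H, C (S (adjoint S (C (adjoint S x)))) =
    adjoint S (C (adjoint S (S (C x))))

namespace Conjugation

variable {E : Type*} [NormedAddCommGroup E] [InnerProductSpace ℂ E] {C : E → E}

theorem map_zero (hC : Conjugation C) : C 0 = 0 := by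
  simpa using hC.1 1 0 0

theorem map_smul (hC : Conjugation C) (a : ℂ) (x : E) :
    C (a • x) = (starRingEnd ℂ) a • C x := by
  simpa [hC.map_zero] using hC.1 a x 0

theorem map_smul_map (hC : Conjugation C) (a : ℂ) (x : E) :
    C (a • C x) = (starRingEnd ℂ) a • x := by
  rw [hC.map_smul, hC.2.1]

end Conjugation

theorem cNormal_iff_of_comp_eq_smul [Nontrivial H] {C : H → H} (hC : Conjugation C)
    {S : H →L[ℂ] H} {μ ν : ℂ} (hμ : adjoint S ∘L S = μ • 1) (hν : S ∘L adjoint S = ν • 1) :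
    CNormal C S ↔ (starRingEnd ℂ) μ = ν := by
  have hSS (x : H) : adjoint S (S x) = μ • x := by simpa using congr($hμ x)
  have hSS' (x : H) : S (adjoint S x) = ν • x := by simpa using congr($hν x)
  simp only [CNormal, hSS, hSS', hC.map_smul_map]
  refine ⟨fun h ↦ ?_, fun h x ↦ by rw [h]⟩
  obtain ⟨x, hx⟩ := exists_ne (0 : H)
  exact smul_left_injective ℂ hx (h x)

theorem stmt14 (C : H → H) (hC : Conjugation C) (S Sinv : H →L[ℂ] H)
    (h1 : S ∘L Sinv = 1) (h2 : Sinv ∘L S = 1) (hS0 : S ≠ 0)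
    (lam : ℂ) (hSa : adjoint S = lam • Sinv) :
    CNormal C S ↔ (starRingEnd ℂ) lam = lam := by
  have : Nontrivial H := not_subsingleton_iff_nontrivial.mp fun _ ↦ hS0 (Subsingleton.elim S 0)
  refine cNormal_iff_of_comp_eq_smul hC ?_ ?_
  · rw [hSa, smul_comp, h2]
  · rw [hSa, comp_smul, h1]
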